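/- arXiv:1703.04516 — 2 statements merged into one kernel-verified Lean document; each statement's English description precedes it below -/
import Mathlib

section
/- Let A be a Grothendieck abelian category and B a localizing subcategory satisfying (Inj). Then every indecomposable injective object of A either belongs to B or is torsion-free; the indecomposable injective objects of A belonging to B are exactly the indecomposable injective objects of B; and T induces a bijection between isomorphism classes of torsion-free indecomposable injective objects of A and isomorphism classes of indecomposable injective objects of A/B. Consequently the set of isomorphism classes of indecomposable injectives of A is the disjoint union of those of B and those of A/B. -/
/-!
The torsion part `Γ I` of an injective `I` is injective in `B`, hence in `A` by (Inj), so it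
splits off `I`; indecomposability then forces `I ∈ B` or `Γ I = 0`.

If `I` is injective and torsion-free, the unit `I ⟶ S (T I)` is an isomorphism: `T` inverts it, so
its kernel and cokernel lie in `B`; the kernel is a torsion subobject of `I`, and the cokernel is a
direct summand of `S (T I)`, which receives no nonzero map from `B`. Hence `T` and `S` are mutually
inverse on torsion-free injectives and injectives of `A/B`, and, `S` being fully faithful, both
preserve indecomposability.
-/

open CategoryTheory Limits

universe v u u'

/-- `X` is indecomposable: it is nonzero and admits no decomposition as the
direct sum of two nonzero objects. -/
def Indec {C : Type*} [Category C] [HasZeroMorphisms C] [HasBinaryBiproducts C]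
    (X : C) : Prop :=
  ¬ IsZero X ∧ ∀ Y Z : C, (Y ⊞ Z ≅ X) → IsZero Y ∨ IsZero Z

/-- `X` is indecomposable within the full subcategory of objects satisfying
`P`: it is nonzero and admits no decomposition as the direct sum of two nonzero
objects satisfying `P`. -/
def IndecWithin {C : Type*} [Category C] [HasZeroMorphisms C]
    [HasBinaryBiproducts C] (P : C → Prop) (X : C) : Prop :=
  ¬ IsZero X ∧ ∀ Y Z : C, P Y → P Z → (Y ⊞ Z ≅ X) → IsZero Y ∨ IsZero Z

variable {A : Type u} [Category.{v} A] [Abelian A]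
variable {Q : Type u'} [Category.{v} Q] [Abelian Q]

/-- Membership in the localizing subcategory `B`, realized as the kernel of the
localization functor `T`. -/
def memB (T : A ⥤ Q) (N : A) : Prop := IsZero (T.obj N)

/-- `Γ` (together with the natural inclusion `ε : Γ ⟶ 𝟭 A`) is the torsion
functor with respect to the localizing subcategory `B = ker T`. -/
structure IsTorsionFunctor (T : A ⥤ Q) (Γ : A ⥤ A) (ε : Γ ⟶ 𝟭 A) : Prop where
  mem : ∀ M : A, memB T (Γ.obj M)
  mono : ∀ M : A, Mono (ε.app M)
  isMax : ∀ (M N : A) (f : N ⟶ M), Mono f → memB T N →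
    ∃ g : N ⟶ Γ.obj M, g ≫ ε.app M = f

namespace Indec

variable {C : Type*} [Category C]

section

variable [HasZeroMorphisms C] [HasBinaryBiproducts C]

lemma of_iso {X Y : C} (hX : Indec X) (e : X ≅ Y) : Indec Y :=
  ⟨fun hY => hX.1 (hY.of_iso e), fun U V e' => hX.2 U V (e' ≪≫ e.symm)⟩

lemma indecWithin {X : C} (hX : Indec X) (P : C → Prop) : IndecWithin P X :=
  ⟨hX.1, fun U V _ _ e => hX.2 U V e⟩

lemma of_faithful_map {D : Type*} [Category D] [HasZeroMorphisms D] [HasBinaryBiproducts D]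
    (F : C ⥤ D) [F.PreservesZeroMorphisms] [PreservesBinaryBiproducts F] [F.Faithful] {X : C}
    (hX : Indec (F.obj X)) : Indec X := by
  have reflect {U : C} (hU : IsZero (F.obj U)) : IsZero U := by
    rw [IsZero.iff_id_eq_zero]
    exact F.map_injective (by rw [F.map_id, F.map_zero, ← IsZero.iff_id_eq_zero]; exact hU)
  exact ⟨fun h => hX.1 (F.map_isZero h), fun U V e =>
    (hX.2 _ _ ((F.mapBiprod U V).symm ≪≫ F.mapIso e)).imp reflect reflect⟩

end

lemma isZero_or_isIso_of_isSplitMono [Abelian C] {X Y : C} (hY : Indec Y) (f : X ⟶ Y)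
    [IsSplitMono f] : IsZero X ∨ IsIso f := by
  have e : X ⊞ cokernel f ≅ Y := (biprod.uniqueUpToIso _ _
    (isBilimitBinaryBiconeOfIsSplitMonoOfCokernel (cokernelIsCokernel f))).symm
  refine (hY.2 _ _ e).imp id fun h => ?_
  have := Preadditive.epi_of_isZero_cokernel f h
  exact isIso_of_mono_of_epi f

end Indec

lemma IndecWithin.indec {C : Type*} [Category C] [HasZeroMorphisms C] [HasBinaryBiproducts C]
    {P : C → Prop} (hP : ∀ {U X : C} (f : U ⟶ X) [Mono f], P X → P U) {X : C} (hPX : P X)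
    (hX : IndecWithin P X) : Indec X :=
  ⟨hX.1, fun U V e => hX.2 U V (hP (biprod.inl ≫ e.hom) hPX) (hP (biprod.inr ≫ e.hom) hPX) e⟩

lemma isSplitMono_of_injective {C : Type*} [Category C] {X J : C} [Injective X] (f : X ⟶ J)
    [Mono f] : IsSplitMono f :=
  IsSplitMono.mk' ⟨Injective.factorThru (𝟙 X) f, Injective.comp_factorThru _ _⟩

section Localization

variable {A Q : Type*} [Category.{v} A] [Category.{v} Q] (T : A ⥤ Q)

lemma memB_of_mono [HasZeroMorphisms Q] [T.PreservesMonomorphisms] {N M : A} (f : N ⟶ M)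
    [Mono f] (hM : memB T M) : memB T N :=
  IsZero.of_mono (T.map f) hM

section

variable [Abelian A] [HasZeroMorphisms Q] [T.PreservesZeroMorphisms]

lemma memB_kernel_of_isIso_map [T.PreservesMonomorphisms] {M N : A} (f : M ⟶ N)
    [IsIso (T.map f)] : memB T (kernel f) :=
  IsZero.of_mono_eq_zero _ <| by
    rw [← cancel_mono (T.map f), ← T.map_comp, kernel.condition, T.map_zero, zero_comp]

lemma memB_cokernel_of_isIso_map [T.PreservesEpimorphisms] {M N : A} (f : M ⟶ N)
    [IsIso (T.map f)] : memB T (cokernel f) :=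
  IsZero.of_epi_eq_zero _ <| by
    rw [← cancel_epi (T.map f), ← T.map_comp, cokernel.condition, T.map_zero, comp_zero]

end

lemma mono_hom_of_mono [Abelian A] [HasZeroMorphisms Q] [T.PreservesMonomorphisms]
    {X Y : ObjectProperty.FullSubcategory (memB T)} (f : X ⟶ Y) [Mono f] : Mono f.hom := by
  let K : ObjectProperty.FullSubcategory (memB T) :=
    ⟨kernel f.hom, memB_of_mono T (kernel.ι _) X.2⟩
  have hι : (ObjectProperty.homMk (kernel.ι f.hom) : K ⟶ X) = ObjectProperty.homMk 0 := by
    rw [← cancel_mono f]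
    ext
    exact (kernel.condition _).trans zero_comp.symm
  exact Abelian.mono_of_kernel_ι_eq_zero _ (congrArg (·.hom) hι)

instance [Abelian A] [HasZeroMorphisms Q] [T.PreservesMonomorphisms] :
    (ObjectProperty.ι (memB T)).PreservesMonomorphisms :=
  ⟨fun f _ => mono_hom_of_mono T f⟩

variable {T} {S : Q ⥤ A} (adj : T ⊣ S)

include adj in
lemma eq_zero_of_memB [HasZeroMorphisms A] {N : A} (hN : memB T N) {X : Q} (f : N ⟶ S.obj X) :
    f = 0 :=
  (adj.homEquiv N X).symm.injective (hN.eq_of_src _ _)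

include adj in
lemma isZero_of_mono_of_memB [HasZeroMorphisms A] {N : A} (hN : memB T N) {X : Q}
    (f : N ⟶ S.obj X) [Mono f] : IsZero N :=
  IsZero.of_mono_eq_zero f (eq_zero_of_memB adj hN f)

lemma isIso_map_unit_app [IsIso adj.counit] (M : A) : IsIso (T.map (adj.unit.app M)) := by
  have h : T.map (adj.unit.app M) = inv (adj.counit.app (T.obj M)) := by
    rw [← cancel_mono (adj.counit.app (T.obj M)), IsIso.inv_hom_id]
    exact adj.left_triangle_components M
  rw [h]
  infer_instance

lemma injective_obj_of_isIso_unit_app [IsIso adj.counit] {M : A} (hM : Injective M)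
    [IsIso (adj.unit.app M)] : Injective (T.obj M) :=
  have := adj.fullyFaithfulROfIsIsoCounit.full
  have := adj.fullyFaithfulROfIsIsoCounit.faithful
  adj.injective_of_map_injective _ (hM.of_iso (asIso (adj.unit.app M)))

lemma Indec.rightAdjoint_obj [HasZeroMorphisms A] [HasBinaryBiproducts A] [HasZeroMorphisms Q]
    [HasBinaryBiproducts Q] [T.PreservesZeroMorphisms] [PreservesBinaryBiproducts T]
    [IsIso adj.counit] {J : Q} (hJ : Indec J) : Indec (S.obj J) := by
  refine ⟨fun h => hJ.1 ((T.map_isZero h).of_iso (asIso (adj.counit.app J)).symm), fun U V e => ?_⟩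
  refine (hJ.2 _ _ ((T.mapBiprod U V).symm ≪≫ T.mapIso e ≪≫ asIso (adj.counit.app J))).imp
    (fun hU => ?_) (fun hV => ?_)
  · exact isZero_of_mono_of_memB adj hU (biprod.inl ≫ e.hom)
  · exact isZero_of_mono_of_memB adj hV (biprod.inr ≫ e.hom)

lemma Indec.leftAdjoint_obj [Preadditive A] [HasBinaryBiproducts A] [Preadditive Q]
    [HasBinaryBiproducts Q] [IsIso adj.counit] {M : A} (hM : Indec M) [IsIso (adj.unit.app M)] :
    Indec (T.obj M) :=
  have := adj.isRightAdjoint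
  have : PreservesLimitsOfSize.{0, 0} S := adj.rightAdjoint_preservesLimits
  have := preservesBinaryBiproducts_of_preservesBinaryProducts S
  have := adj.fullyFaithfulROfIsIsoCounit.faithful
  (hM.of_iso (asIso (adj.unit.app M))).of_faithful_map S

variable {Γ : A ⥤ A} {ε : Γ ⟶ 𝟭 A} (hΓ : IsTorsionFunctor T Γ ε)
include hΓ

lemma IsTorsionFunctor.isZero_of_mono [HasZeroMorphisms A] {N M : A} (hN : memB T N)
    (hM : IsZero (Γ.obj M)) (f : N ⟶ M) [Mono f] : IsZero N := by
  obtain ⟨g, hg⟩ := hΓ.isMax M N f inferInstance hN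
  exact IsZero.of_mono_eq_zero f (by rw [← hg, hM.eq_of_tgt g 0, zero_comp])

lemma IsTorsionFunctor.exists_lift [Abelian A] [HasZeroMorphisms Q] [T.PreservesEpimorphisms]
    {N M : A} (hN : memB T N) (f : N ⟶ M) : ∃ g : N ⟶ Γ.obj M, g ≫ ε.app M = f := by
  obtain ⟨u, hu⟩ := hΓ.isMax M (image f) (image.ι f) inferInstance
    (IsZero.of_epi (T.map (factorThruImage f)) hN)
  exact ⟨factorThruImage f ≫ u, by rw [Category.assoc, hu, image.fac]⟩

lemma IsTorsionFunctor.injective_obj [Abelian A] [HasZeroMorphisms Q] [T.PreservesMonomorphisms]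
    [T.PreservesEpimorphisms] {M : A} (hM : Injective M) :
    Injective (⟨Γ.obj M, hΓ.mem M⟩ : ObjectProperty.FullSubcategory (memB T)) where
  factors {X Y} g f _ := by
    obtain ⟨h, hh⟩ := hM.factors (g.hom ≫ ε.app M) ((ObjectProperty.ι (memB T)).map f)
    obtain ⟨u, hu⟩ := hΓ.exists_lift Y.2 h
    refine ⟨ObjectProperty.homMk u, ?_⟩
    have := hΓ.mono M
    ext
    rw [← cancel_mono (ε.app M)]
    simpa [hu] using hh

lemma IsTorsionFunctor.memB_or_isZero_of_indec [Abelian A] [HasZeroMorphisms Q]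
    [T.PreservesMonomorphisms] {M : A} (hM : Indec M) (hΓM : Injective (Γ.obj M)) :
    memB T M ∨ IsZero (Γ.obj M) := by
  have := hΓ.mono M
  have := isSplitMono_of_injective (ε.app M)
  rcases hM.isZero_or_isIso_of_isSplitMono (ε.app M) with hTF | _
  · exact Or.inr hTF
  · exact Or.inl (memB_of_mono T (inv (ε.app M)) (hΓ.mem M))

include adj in
lemma IsTorsionFunctor.isZero_obj_rightAdjoint_obj [HasZeroMorphisms A] (X : Q) :
    IsZero (Γ.obj (S.obj X)) :=
  have := hΓ.mono (S.obj X)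
  isZero_of_mono_of_memB adj (hΓ.mem _) (ε.app (S.obj X))

lemma IsTorsionFunctor.isIso_unit_app [Abelian A] [HasZeroMorphisms Q] [T.PreservesZeroMorphisms]
    [T.PreservesMonomorphisms] [T.PreservesEpimorphisms] [IsIso adj.counit] {M : A}
    (hM : Injective M) (hTF : IsZero (Γ.obj M)) : IsIso (adj.unit.app M) := by
  have := isIso_map_unit_app adj M
  have : Mono (adj.unit.app M) := Abelian.mono_of_kernel_ι_eq_zero _
    ((hΓ.isZero_of_mono (memB_kernel_of_isIso_map T _) hTF (kernel.ι _)).eq_of_src _ _)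
  have := isSplitMono_of_injective (adj.unit.app M)
  let b := binaryBiconeOfIsSplitMonoOfCokernel (cokernelIsCokernel (adj.unit.app M))
  have hC : IsZero (cokernel (adj.unit.app M)) := by
    rw [IsZero.iff_id_eq_zero]
    calc 𝟙 _ = b.inr ≫ b.snd := b.inr_snd.symm
      _ = 0 := by rw [eq_zero_of_memB adj (memB_cokernel_of_isIso_map T _) b.inr]; exact zero_comp
  have := Preadditive.epi_of_isZero_cokernel _ hC
  exact isIso_of_mono_of_epi _

end Localization

theorem statement4_general
    -- the localization functor `T` and the section functor `S`:
    (T : A ⥤ Q) (S : Q ⥤ A) (adj : T ⊣ S)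
    [PreservesFiniteLimits T] [IsIso adj.counit]
    -- property (Inj): injective objects of `B` remain injective in `A`:
    (hInj : ∀ J : ObjectProperty.FullSubcategory (memB T), Injective J → Injective J.obj)
    -- the torsion functor `Γ`:
    (Γ : A ⥤ A) (ε : Γ ⟶ 𝟭 A) (hΓ : IsTorsionFunctor T Γ ε) :
    -- (1) every indecomposable injective of `A` lies in `B` or is torsion-free:
    (∀ I : A, Injective I → Indec I → memB T I ∨ IsZero (Γ.obj I)) ∧
    -- (2) ... and not both:
    (∀ I : A, Injective I → Indec I → ¬ (memB T I ∧ IsZero (Γ.obj I))) ∧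
    -- (3) indecomposable injectives of `A` lying in `B`
    --     = indecomposable injectives of the category `B`:
    (∀ (I : A) (h : memB T I),
      (Injective I ∧ Indec I) ↔
        (Injective (⟨I, h⟩ : ObjectProperty.FullSubcategory (memB T)) ∧ IndecWithin (memB T) I)) ∧
    -- (4) `T` gives a bijection on isomorphism classes between torsion-free
    --     indecomposable injectives of `A` and indecomposable injectives of `A/B`:
    (∀ I : A, Injective I → IsZero (Γ.obj I) → Indec I →
      Injective (T.obj I) ∧ Indec (T.obj I)) ∧
    (∀ I I' : A, Injective I → IsZero (Γ.obj I) → Indec I →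
      Injective I' → IsZero (Γ.obj I') → Indec I' →
      Nonempty (T.obj I ≅ T.obj I') → Nonempty (I ≅ I')) ∧
    (∀ J : Q, Injective J → Indec J →
      ∃ I : A, Injective I ∧ IsZero (Γ.obj I) ∧ Indec I ∧
        Nonempty (T.obj I ≅ J)) := by
  have := adj.isLeftAdjoint
  have := preservesBinaryBiproducts_of_preservesBinaryProducts T
  refine ⟨fun I hI hIndec => ?_, fun I _ hIndec ⟨hB, hTF⟩ => ?_, fun I hB => ⟨?_, ?_⟩,
    fun I hI hTF hIndec => ?_, fun I I' hI hTF _ hI' hTF' _ ⟨e⟩ => ?_, fun J hJ hJIndec => ?_⟩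
  · exact hΓ.memB_or_isZero_of_indec hIndec (hInj _ (hΓ.injective_obj hI))
  · exact hIndec.1 (hΓ.isZero_of_mono hB hTF (𝟙 I))
  · exact fun ⟨hI, hIndec⟩ =>
      ⟨(ObjectProperty.ι (memB T)).injective_of_map_injective hI, hIndec.indecWithin _⟩
  · exact fun ⟨hI, hIndec⟩ => ⟨hInj _ hI, hIndec.indec (memB_of_mono T) hB⟩
  · have := hΓ.isIso_unit_app adj hI hTF
    exact ⟨injective_obj_of_isIso_unit_app adj hI, hIndec.leftAdjoint_obj adj⟩
  · have := hΓ.isIso_unit_app adj hI hTF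
    have := hΓ.isIso_unit_app adj hI' hTF'
    exact ⟨asIso (adj.unit.app I) ≪≫ S.mapIso e ≪≫ (asIso (adj.unit.app I')).symm⟩
  · exact ⟨S.obj J, Injective.injective_of_adjoint adj J, hΓ.isZero_obj_rightAdjoint_obj adj J,
      hJIndec.rightAdjoint_obj adj, ⟨asIso (adj.counit.app J)⟩⟩

theorem statement4
    -- `A` is Grothendieck abelian:
    [HasColimits A] [AB5 A] [HasSeparator A]
    -- the localization functor `T` and the section functor `S`:
    (T : A ⥤ Q) (S : Q ⥤ A) (adj : T ⊣ S)
    [T.Additive] [PreservesFiniteLimits T] [IsIso adj.counit]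
    -- property (Inj): injective objects of `B` remain injective in `A`:
    (hInj : ∀ J : ObjectProperty.FullSubcategory (memB T), Injective J → Injective J.obj)
    -- the torsion functor `Γ`:
    (Γ : A ⥤ A) (ε : Γ ⟶ 𝟭 A) (hΓ : IsTorsionFunctor T Γ ε) :
    -- (1) every indecomposable injective of `A` lies in `B` or is torsion-free:
    (∀ I : A, Injective I → Indec I → memB T I ∨ IsZero (Γ.obj I)) ∧
    -- (2) ... and not both:
    (∀ I : A, Injective I → Indec I → ¬ (memB T I ∧ IsZero (Γ.obj I))) ∧
    -- (3) indecomposable injectives of `A` lying in `B`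
    --     = indecomposable injectives of the category `B`:
    (∀ (I : A) (h : memB T I),
      (Injective I ∧ Indec I) ↔
        (Injective (⟨I, h⟩ : ObjectProperty.FullSubcategory (memB T)) ∧ IndecWithin (memB T) I)) ∧
    -- (4) `T` gives a bijection on isomorphism classes between torsion-free
    --     indecomposable injectives of `A` and indecomposable injectives of `A/B`:
    (∀ I : A, Injective I → IsZero (Γ.obj I) → Indec I →
      Injective (T.obj I) ∧ Indec (T.obj I)) ∧
    (∀ I I' : A, Injective I → IsZero (Γ.obj I) → Indec I →
      Injective I' → IsZero (Γ.obj I') → Indec I' →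
      Nonempty (T.obj I ≅ T.obj I') → Nonempty (I ≅ I')) ∧
    (∀ J : Q, Injective J → Indec J →
      ∃ I : A, Injective I ∧ IsZero (Γ.obj I) ∧ Indec I ∧
        Nonempty (T.obj I ≅ J)) :=
  statement4_general T S adj hInj Γ ε hΓ
end

section
/- Let A be a locally noetherian Grothendieck abelian category equipped with a symmetric monoidal structure whose tensor product is right exact in each variable. Let a be a subobject of the unit object 𝟙 (an ideal); for n ≥ 0 let a^n ⊆ 𝟙 be the image of a^{⊗n} → 𝟙, and for an object M let a^n M ⊆ M be the image of a^n ⊗ M → 𝟙 ⊗ M ≅ M. Let B be the full subcategory of A consisting of objects that are locally annihilated by a power of a (objects M equal to the union of their subobjects N with a^k N = 0 for some k). Assume the Artin–Rees condition (∗∗): for every noetherian object M and every subobject N ⊆ M there exists r such that a^n M ∩ N = a^{n−r}(a^r M ∩ N) for all n ≥ r. Then for every noetherian object M of A there exists a subobject M₀ ⊆ M such that M/M₀ belongs to B and M₀ has no nonzero subobject belonging to B (condition (∗) holds for B). -/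
/-!
STATEMENT 12. Let `A` be a locally noetherian Grothendieck abelian category
with a symmetric monoidal structure whose tensor product is right exact in each
variable.  Let `a` be a subobject of the unit object `𝟙` (an ideal); for
`n ≥ 0` let `a^n ⊆ 𝟙` be the image of `a^{⊗n} → 𝟙`, and for an object `M` and
a subobject `K ⊆ M` let `a^n K ⊆ M` be the image of `a^n ⊗ K → 𝟙 ⊗ M ≅ M`.
Let `B` consist of the objects locally annihilated by a power of `a` (objects
equal to the union of their subobjects `N` with `a^k N = 0` for some `k`).
Assume the Artin–Rees condition (∗∗): for every noetherian object `M` and every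
subobject `N ⊆ M` there is `r` with `a^n M ⊓ N = a^{n−r}(a^r M ⊓ N)` for all
`n ≥ r`.  Then for every noetherian object `M` there is a subobject `M₀ ⊆ M`
with `M/M₀ ∈ B` and `M₀` having no nonzero subobject in `B` (condition (∗)).
-/

open CategoryTheory Limits MonoidalCategory

universe v u

variable {A : Type u} [Category.{v} A] [Abelian A] [MonoidalCategory A]

/-- The `n`-th power `a^n ⊆ 𝟙` of an ideal `a ⊆ 𝟙`: the image of the map
`a^{⊗n} → 𝟙`. -/
noncomputable def idealPow (a : Subobject (𝟙_ A)) : ℕ → Subobject (𝟙_ A)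
  | 0 => ⊤
  | n + 1 => imageSubobject ((a.arrow ⊗ₘ (idealPow a n).arrow) ≫ (λ_ (𝟙_ A)).hom)

/-- For a subobject `K ⊆ M`, the subobject `a^n K ⊆ M`: the image of
`a^n ⊗ K → 𝟙 ⊗ M ≅ M`. -/
noncomputable def idealSMul (a : Subobject (𝟙_ A)) (n : ℕ) {M : A}
    (K : Subobject M) : Subobject M :=
  imageSubobject (((idealPow a n).arrow ⊗ₘ K.arrow) ≫ (λ_ M).hom)

variable [HasColimits A] [HasLimits A] [WellPowered.{v} A]

noncomputable instance (M : A) : SupSet (Subobject M) :=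
  (Subobject.instCompleteLattice.{v} (B := M)).toSupSet

/-- `M` is locally annihilated by a power of `a`: it is the union of its
subobjects `N` with `a^k N = 0` for some `k`. -/
noncomputable def locallyTorsion (a : Subobject (𝟙_ A)) (M : A) : Prop :=
  (⨆ (N : Subobject M) (_ : ∃ k : ℕ, idealSMul a k N = (⊥ : Subobject M)), N)
    = (⊤ : Subobject M)

/-
The subobjects of `M` killed by some power of `a` are closed under binary joins, so the ascending
chain condition yields a greatest one, `t`, say killed by `a^k`. Artin–Rees for `t ⊆ M` gives `r`
with `a^{r+k} M ⊓ t = a^k (a^r M ⊓ t) ≤ a^k t = 0`. Hence `M₀ = a^{r+k} M` works: `M / M₀` is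
killed by `a^{r+k}`, and every subobject of `M₀` killed by a power of `a` lies in `M₀ ⊓ t = 0`.
-/

lemma SupClosed.exists_isGreatest {α : Type*} [SemilatticeSup α] [WellFoundedGT α] {S : Set α}
    (hS : SupClosed S) (hne : S.Nonempty) : ∃ t, IsGreatest S t := by
  obtain ⟨t, ht⟩ := WellFoundedGT.exists_maximal inferInstance S hne
  exact ⟨t, ht.prop, fun _ hK => le_sup_right.trans (ht.2 (hS ht.prop hK) le_sup_left)⟩

namespace CategoryTheory.Subobject

lemma map_obj_le_mk {C : Type*} [Category C] {X Y : C} (f : X ⟶ Y) [Mono f]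
    (K : Subobject X) : (map f).obj K ≤ mk f := by
  rw [← mk_arrow K, map_mk]
  exact mk_le_mk_of_comm _ rfl

lemma isZero_of_top_eq_bot {C : Type*} [Category C] [Abelian C] {X : C}
    (h : (⊤ : Subobject X) = ⊥) : IsZero X := by
  by_contra hX
  have := nontrivial_of_not_isZero hX
  exact top_ne_bot h

end CategoryTheory.Subobject

section Images

variable {C : Type*} [Category C] [Abelian C]

lemma imageSubobject_eq_bot_iff {X Y : C} (f : X ⟶ Y) : imageSubobject f = ⊥ ↔ f = 0 := by
  refine ⟨fun h => ?_, fun h => h ▸ imageSubobject_zero⟩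
  rw [← Subobject.bot_factors_iff_zero, ← h]
  simpa using imageSubobject_factors_comp_self f (𝟙 X)

lemma imageSubobject_epi_comp {X' X Y : C} (h : X' ⟶ X) [Epi h] (f : X ⟶ Y) :
    imageSubobject (h ≫ f) = imageSubobject f := by
  have : IsIso (Subobject.ofLE _ _ (imageSubobject_comp_le h f)) := isIso_of_mono_of_epi _
  exact Subobject.eq_of_comm (asIso (Subobject.ofLE _ _ (imageSubobject_comp_le h f)))
    (Subobject.ofLE_arrow _)

lemma imageSubobject_coprod_desc {X₁ X₂ Y : C} (f₁ : X₁ ⟶ Y) (f₂ : X₂ ⟶ Y) :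
    imageSubobject (coprod.desc f₁ f₂) = imageSubobject f₁ ⊔ imageSubobject f₂ := by
  refine le_antisymm (imageSubobject_le _ (coprod.desc
      (factorThruImageSubobject f₁ ≫ Subobject.ofLE _ _ le_sup_left)
      (factorThruImageSubobject f₂ ≫ Subobject.ofLE _ _ le_sup_right)) (by ext <;> simp))
    (sup_le ?_ ?_)
  · exact imageSubobject_le _ (coprod.inl ≫ factorThruImageSubobject _)
      (by simp only [Category.assoc, imageSubobject_arrow_comp]; exact coprod.inl_desc _ _)
  · exact imageSubobject_le _ (coprod.inr ≫ factorThruImageSubobject _)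
      (by simp only [Category.assoc, imageSubobject_arrow_comp]; exact coprod.inr_desc _ _)

end Images

section Monoidal

variable {C : Type*} [Category C] [MonoidalCategory C]

lemma tensorHom_comp_leftUnitor_hom {P X Y : C} (q : P ⟶ 𝟙_ C) (f : X ⟶ Y) :
    (q ⊗ₘ f) ≫ (λ_ Y).hom = q ▷ X ≫ (λ_ X).hom ≫ f := by
  rw [MonoidalCategory.tensorHom_def, Category.assoc, leftUnitor_naturality]

lemma tensorHom_coprod_desc_comp_leftUnitor_hom [HasBinaryCoproducts C] {P X₁ X₂ Y : C}
    [PreservesColimit (pair X₁ X₂) (tensorLeft P)] (q : P ⟶ 𝟙_ C) (f₁ : X₁ ⟶ Y) (f₂ : X₂ ⟶ Y) :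
    (q ⊗ₘ coprod.desc f₁ f₂) ≫ (λ_ Y).hom =
      inv (coprodComparison (tensorLeft P) X₁ X₂) ≫
        coprod.desc ((q ⊗ₘ f₁) ≫ (λ_ Y).hom) ((q ⊗ₘ f₂) ≫ (λ_ Y).hom) := by
  rw [IsIso.eq_inv_comp]
  simp only [tensorHom_comp_leftUnitor_hom]
  ext
  · rw [coprodComparison_inl_assoc, coprod.inl_desc, curriedTensor_obj_map,
      whisker_exchange_assoc, leftUnitor_naturality_assoc, coprod.inl_desc]
  · rw [coprodComparison_inr_assoc, coprod.inr_desc, curriedTensor_obj_map,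
      whisker_exchange_assoc, leftUnitor_naturality_assoc, coprod.inr_desc]

end Monoidal

section IdealSMul

variable {C : Type u} [Category.{v} C] [Abelian C] [MonoidalCategory C] (a : Subobject (𝟙_ C))

lemma idealSMul_eq_imageSubobject (n : ℕ) {M : C} (K : Subobject M) :
    idealSMul a n K =
      imageSubobject ((idealPow a n).arrow ▷ (K : C) ≫ (λ_ (K : C)).hom ≫ K.arrow) := by
  simp only [idealSMul, tensorHom_comp_leftUnitor_hom]

lemma idealSMul_mk (n : ℕ) {X M : C} (i : X ⟶ M) [Mono i] :
    idealSMul a n (Subobject.mk i) =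
      imageSubobject ((idealPow a n).arrow ▷ X ≫ (λ_ X).hom ≫ i) := by
  rw [idealSMul_eq_imageSubobject, ← Subobject.underlyingIso_hom_comp_eq_mk,
    ← imageSubobject_iso_comp (_ ◁ (Subobject.underlyingIso i).hom)]
  simp only [whisker_exchange_assoc, leftUnitor_naturality_assoc]

lemma idealSMul_top (n : ℕ) (M : C) :
    idealSMul a n (⊤ : Subobject M) = imageSubobject ((idealPow a n).arrow ▷ M ≫ (λ_ M).hom) := by
  rw [Subobject.top_eq_id, idealSMul_mk, Category.comp_id]

lemma idealSMul_eq_bot_iff (n : ℕ) {M : C} (K : Subobject M) :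
    idealSMul a n K = ⊥ ↔ (idealPow a n).arrow ▷ (K : C) ≫ (λ_ (K : C)).hom = 0 := by
  rw [idealSMul_eq_imageSubobject, imageSubobject_eq_bot_iff, ← Category.assoc]
  exact ⟨zero_of_comp_mono K.arrow, fun h => by rw [h, zero_comp]⟩

lemma idealSMul_bot (n : ℕ) (M : C) : idealSMul a n (⊥ : Subobject M) = ⊥ :=
  (idealSMul_eq_bot_iff a n ⊥).2 <|
    (IsZero.of_iso (isZero_zero C) Subobject.botCoeIsoZero).eq_of_tgt _ _

lemma idealSMul_map_eq_bot_iff (n : ℕ) {X Y : C} (f : X ⟶ Y) [Mono f] (K : Subobject X) :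
    idealSMul a n ((Subobject.map f).obj K) = ⊥ ↔ idealSMul a n K = ⊥ := by
  conv_lhs => rw [← Subobject.mk_arrow K, Subobject.map_mk]
  rw [idealSMul_mk, imageSubobject_eq_bot_iff, idealSMul_eq_bot_iff]
  simp only [← Category.assoc]
  exact ⟨fun h => zero_of_comp_mono K.arrow (zero_of_comp_mono f h),
    fun h => by rw [h, zero_comp, zero_comp]⟩

lemma idealPow_succ_le (n : ℕ) : idealPow a (n + 1) ≤ idealPow a n := by
  rw [idealPow]
  exact imageSubobject_le _ (a.arrow ▷ _ ≫ (λ_ _).hom)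
    (by rw [Category.assoc, tensorHom_comp_leftUnitor_hom])

lemma idealPow_antitone : Antitone (idealPow a) :=
  antitone_nat_of_succ_le (idealPow_succ_le a)

lemma idealSMul_le_idealSMul {m n : ℕ} (hmn : m ≤ n) {M : C} {K L : Subobject M} (hKL : K ≤ L) :
    idealSMul a n K ≤ idealSMul a m L := by
  have h : ((idealPow a n).arrow ⊗ₘ K.arrow) ≫ (λ_ M).hom =
      (Subobject.ofLE _ _ (idealPow_antitone a hmn) ⊗ₘ Subobject.ofLE _ _ hKL) ≫
        ((idealPow a m).arrow ⊗ₘ L.arrow) ≫ (λ_ M).hom := by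
    rw [tensorHom_comp_tensorHom_assoc, Subobject.ofLE_arrow, Subobject.ofLE_arrow]
  simp only [idealSMul, h]
  exact imageSubobject_comp_le _ _

variable [∀ X : C, PreservesFiniteColimits (tensorLeft X)]

lemma idealSMul_sup (n : ℕ) {M : C} (K L : Subobject M) :
    idealSMul a n (K ⊔ L) = idealSMul a n K ⊔ idealSMul a n L := by
  have hKL : imageSubobject (coprod.desc K.arrow L.arrow) = K ⊔ L := by
    rw [imageSubobject_coprod_desc, imageSubobject_mono, imageSubobject_mono, Subobject.mk_arrow,
      Subobject.mk_arrow]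
  let e := factorThruImageSubobject (coprod.desc K.arrow L.arrow) ≫ (Subobject.isoOfEq _ _ hKL).hom
  have he : e ≫ (K ⊔ L).arrow = coprod.desc K.arrow L.arrow := by simp [e]
  have : Epi ((idealPow a n : C) ◁ e) := (tensorLeft _).map_epi e
  rw [idealSMul, ← imageSubobject_epi_comp (_ ◁ e), whiskerLeft_comp_tensorHom_assoc, he,
    tensorHom_coprod_desc_comp_leftUnitor_hom, imageSubobject_iso_comp, imageSubobject_coprod_desc]
  rfl

end IdealSMul

section Torsion

variable {C : Type u} [Category.{v} C] [Abelian C] [MonoidalCategory C] (a : Subobject (𝟙_ C))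

def IsAnnihilatedByPow {M : C} (K : Subobject M) : Prop :=
  ∃ k : ℕ, idealSMul a k K = ⊥

def IsTorsionFree (X : C) : Prop :=
  ∀ K : Subobject X, IsAnnihilatedByPow a K → K = ⊥

lemma isAnnihilatedByPow_bot (M : C) : IsAnnihilatedByPow a (⊥ : Subobject M) :=
  ⟨0, idealSMul_bot a 0 M⟩

lemma isAnnihilatedByPow_map_iff {X Y : C} (f : X ⟶ Y) [Mono f] (K : Subobject X) :
    IsAnnihilatedByPow a ((Subobject.map f).obj K) ↔ IsAnnihilatedByPow a K :=
  exists_congr fun k => idealSMul_map_eq_bot_iff a k f K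

lemma IsTorsionFree.of_mono {X Y : C} (f : X ⟶ Y) [Mono f] (hY : IsTorsionFree a Y) :
    IsTorsionFree a X := fun K hK =>
  Subobject.map_obj_injective f <| by
    rw [Subobject.map_bot]
    exact hY _ ((isAnnihilatedByPow_map_iff a f K).2 hK)

lemma isTorsionFree_of_inf_eq_bot {M : C} {S t : Subobject M}
    (ht : ∀ K, IsAnnihilatedByPow a K → K ≤ t) (hSt : S ⊓ t = ⊥) : IsTorsionFree a (S : C) :=
  fun K hK => Subobject.map_obj_injective S.arrow <| by
    rw [Subobject.map_bot, ← le_bot_iff, ← hSt]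
    refine le_inf ?_ (ht _ ((isAnnihilatedByPow_map_iff a _ K).2 hK))
    simpa only [Subobject.mk_arrow] using Subobject.map_obj_le_mk S.arrow K

variable [∀ X : C, PreservesFiniteColimits (tensorLeft X)]

lemma IsAnnihilatedByPow.sup {M : C} {K L : Subobject M} (hK : IsAnnihilatedByPow a K)
    (hL : IsAnnihilatedByPow a L) : IsAnnihilatedByPow a (K ⊔ L) := by
  obtain ⟨k, hk⟩ := hK
  obtain ⟨l, hl⟩ := hL
  refine ⟨max k l, ?_⟩
  rw [idealSMul_sup, ← le_bot_iff]
  exact sup_le ((idealSMul_le_idealSMul a (le_max_left k l) le_rfl).trans hk.le)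
    ((idealSMul_le_idealSMul a (le_max_right k l) le_rfl).trans hl.le)

lemma idealSMul_top_cokernel_eq_bot (n : ℕ) (M : C) :
    idealSMul a n (⊤ : Subobject (cokernel (idealSMul a n (⊤ : Subobject M)).arrow)) = ⊥ := by
  generalize hS : idealSMul a n (⊤ : Subobject M) = S
  rw [idealSMul_top] at hS
  subst hS
  set f := (idealPow a n).arrow ▷ M ≫ (λ_ M).hom
  set π := cokernel.π (imageSubobject f).arrow
  have hf : f ≫ π = 0 := by
    simpa only [imageSubobject_arrow_comp_assoc, comp_zero] using
      factorThruImageSubobject f ≫= cokernel.condition (imageSubobject f).arrow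
  have : Epi ((idealPow a n : C) ◁ π) := (tensorLeft _).map_epi π
  rw [idealSMul_top, imageSubobject_eq_bot_iff, ← cancel_epi ((idealPow a n : C) ◁ π), comp_zero,
    whisker_exchange_assoc, leftUnitor_naturality, ← Category.assoc]
  exact hf

lemma exists_isGreatest_isAnnihilatedByPow (M : C) [IsNoetherianObject M] :
    ∃ t, IsGreatest {K : Subobject M | IsAnnihilatedByPow a K} t :=
  SupClosed.exists_isGreatest (fun _ hK _ hL => hK.sup a hL) ⟨⊥, isAnnihilatedByPow_bot a M⟩

end Torsion

-- Mathlib's `CompleteLattice (Subobject X)` instance has a universe parameter that instance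
-- search cannot determine, so it is supplied by hand below.
section LocallyTorsion

variable {C : Type u} [Category.{v} C] [Abelian C] [MonoidalCategory C] [HasColimits C]
  [HasLimits C] [WellPowered.{v} C] (a : Subobject (𝟙_ C))

lemma locallyTorsion_of_idealSMul_top_eq_bot {X : C} {k : ℕ}
    (h : idealSMul a k (⊤ : Subobject X) = ⊥) : locallyTorsion a X := by
  let := Subobject.instCompleteLattice.{v} (B := X)
  exact top_le_iff.mp (le_iSup₂_of_le ⊤ ⟨k, h⟩ le_rfl)

lemma IsTorsionFree.isZero_of_locallyTorsion {X : C} (hX : IsTorsionFree a X)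
    (h : locallyTorsion a X) : IsZero X := by
  let := Subobject.instCompleteLattice.{v} (B := X)
  refine Subobject.isZero_of_top_eq_bot ?_
  rw [← h]
  exact le_bot_iff.mp (iSup₂_le fun K hK => (hX K hK).le)

end LocallyTorsion

theorem statement12
    -- the monoidal structure is symmetric with right exact tensor product in
    -- each variable:
    [SymmetricCategory A]
    [∀ X : A, PreservesFiniteColimits (tensorLeft X)]
    [∀ X : A, PreservesFiniteColimits (tensorRight X)]
    -- `A` is Grothendieck abelian:
    [AB5 A] [HasSeparator A]
    -- `A` is locally noetherian:
    (hLN : ∀ M : A,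
      (⨆ (N : Subobject M) (_ : IsNoetherianObject (N : A)), N) = (⊤ : Subobject M))
    -- the ideal `a ⊆ 𝟙`:
    (a : Subobject (𝟙_ A))
    -- the Artin–Rees condition (∗∗):
    (hAR : ∀ M : A, IsNoetherianObject M → ∀ N : Subobject M, ∃ r : ℕ,
      ∀ n : ℕ, r ≤ n →
        idealSMul a n (⊤ : Subobject M) ⊓ N =
          idealSMul a (n - r) (idealSMul a r (⊤ : Subobject M) ⊓ N)) :
    -- conclusion: condition (∗) holds for `B`:
    ∀ M : A, IsNoetherianObject M → ∃ M₀ : Subobject M,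
      locallyTorsion a (cokernel M₀.arrow) ∧
      ∀ N : Subobject (M₀ : A), locallyTorsion a ((N : A)) → IsZero ((N : A)) := by
  intro M hM
  obtain ⟨t, ⟨k, htk⟩, ht⟩ := exists_isGreatest_isAnnihilatedByPow a M
  obtain ⟨r, hr⟩ := hAR M hM t
  have hdisjoint : idealSMul a (r + k) ⊤ ⊓ t = ⊥ := by
    rw [hr _ (Nat.le_add_right r k), Nat.add_sub_cancel_left, ← le_bot_iff, ← htk]
    exact idealSMul_le_idealSMul a le_rfl inf_le_right
  refine ⟨idealSMul a (r + k) ⊤,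
    locallyTorsion_of_idealSMul_top_eq_bot a (idealSMul_top_cokernel_eq_bot a _ M), fun N hN => ?_⟩
  exact ((isTorsionFree_of_inf_eq_bot a ht hdisjoint).of_mono a N.arrow).isZero_of_locallyTorsion a hN
end
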